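/- Let 0 < q < 1, let m ≥ 1 be an integer, and let t be a real number with |t| < 1. Then 1/(1-t)_q^m = Σ_{k=0}^∞ [m+k-1 choose k]_q t^k, i.e. ∏_{s=0}^{m-1} (1 - q^s t)^{-1} = Σ_{k=0}^∞ ((1-q^{m+k-1})(1-q^{m+k-2})⋯(1-q^m))/((1-q)(1-q^2)⋯(1-q^k)) · t^k. -/
import Mathlib


open Finset

/-- The q-integer `[n]_q = (1 - q^n)/(1 - q)`. -/
noncomputable def qInt (q : ℝ) (n : ℕ) : ℝ := (1 - q ^ n) / (1 - q)

/-- The q-factorial `[n]_q! = [n]_q [n-1]_q ⋯ [1]_q`, with `[0]_q! = 1`. -/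
noncomputable def qFact (q : ℝ) (n : ℕ) : ℝ := ∏ i ∈ Finset.range n, qInt q (i + 1)

/-- The q-binomial coefficient `[n choose k]_q = [n]_q! / ([k]_q! [n-k]_q!)`. -/
noncomputable def qChoose (q : ℝ) (n k : ℕ) : ℝ := qFact q n / (qFact q k * qFact q (n - k))

/-- auxiliary: product form of `[n+k choose k]_q`. -/
noncomputable def qc (q : ℝ) (n k : ℕ) : ℝ :=
  ∏ i ∈ Finset.range n, (1 - q ^ (k + i + 1)) / (1 - q ^ (i + 1))

section aux

variable {q : ℝ} (hq0 : 0 < q) (hq1 : q < 1)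

include hq0 hq1 in
lemma one_sub_pow_pos (j : ℕ) : 0 < 1 - q ^ (j + 1) := by
  have : q ^ (j + 1) < 1 := pow_lt_one₀ hq0.le hq1 (by omega)
  linarith

include hq0 hq1 in
lemma qInt_pos (j : ℕ) : 0 < qInt q (j + 1) := by
  have h1 := one_sub_pow_pos hq0 hq1 j
  have h2 : 0 < 1 - q := by linarith
  exact div_pos h1 h2

include hq0 hq1 in
lemma qFact_pos (n : ℕ) : 0 < qFact q n := by
  exact Finset.prod_pos fun i _ => qInt_pos hq0 hq1 i

include hq0 hq1 in
lemma qChoose_eq_qc (n k : ℕ) : qChoose q (n + k) k = qc q n k := by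
  have hcancel : n + k - k = n := by omega
  have hFact : qFact q (n + k) = qFact q k * ∏ i ∈ range n, qInt q (k + i + 1) := by
    unfold qFact
    rw [show n + k = k + n by ring, Finset.prod_range_add]
  have hk : qFact q k ≠ 0 := (qFact_pos hq0 hq1 k).ne'
  have hden : ∀ i : ℕ, qInt q (i + 1) ≠ 0 := fun i => (qInt_pos hq0 hq1 i).ne'
  unfold qChoose
  rw [hcancel, hFact]
  unfold qFact
  rw [mul_div_mul_left _ _ (by positivity : (∏ i ∈ range k, qInt q (i + 1)) ≠ 0),
    ← Finset.prod_div_distrib]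
  refine Finset.prod_congr rfl fun i _ => ?_
  have h1 : (1 : ℝ) - q ≠ 0 := by linarith
  have h2 : (1 : ℝ) - q ^ (i + 1) ≠ 0 := (one_sub_pow_pos hq0 hq1 i).ne'
  unfold qInt
  rw [div_div_div_comm, div_self h1, div_one]

include hq0 hq1 in
lemma qc_nonneg (n k : ℕ) : 0 ≤ qc q n k :=
  Finset.prod_nonneg fun i _ => div_nonneg (by nlinarith [one_sub_pow_pos hq0 hq1 (k + i)])
    (one_sub_pow_pos hq0 hq1 i).le

include hq0 hq1 in
lemma qc_le (n k : ℕ) : qc q n k ≤ (∏ i ∈ range n, (1 - q ^ (i + 1)))⁻¹ := by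
  unfold qc
  rw [Finset.prod_div_distrib, div_eq_mul_inv]
  have hD : (0:ℝ) < (∏ i ∈ range n, (1 - q ^ (i + 1)))⁻¹ :=
    inv_pos.mpr (Finset.prod_pos fun i _ => one_sub_pow_pos hq0 hq1 i)
  have hnum : (∏ i ∈ range n, (1 - q ^ (k + i + 1))) ≤ 1 := by
    apply Finset.prod_le_one
    · intro i _
      have := one_sub_pow_pos hq0 hq1 (k + i)
      linarith
    · intro i _
      have : 0 < q ^ (k + i + 1) := by positivity
      linarith
  nlinarith

include hq0 hq1 in
lemma qc_summable (n : ℕ) {t : ℝ} (ht : |t| < 1) :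
    Summable (fun k : ℕ => qc q n k * t ^ k) := by
  apply Summable.of_norm_bounded
    (g := fun k : ℕ => (∏ i ∈ range n, (1 - q ^ (i + 1)))⁻¹ * |t| ^ k)
  · exact (summable_geometric_of_lt_one (abs_nonneg t) ht).mul_left _
  · intro k
    rw [norm_mul, norm_pow, Real.norm_eq_abs, Real.norm_eq_abs,
      abs_of_nonneg (qc_nonneg hq0 hq1 n k)]
    exact mul_le_mul_of_nonneg_right (qc_le hq0 hq1 n k) (by positivity)

include hq0 hq1 in
lemma qc_pascal (n k : ℕ) :
    qc q (n + 1) (k + 1) - qc q (n + 1) k = q ^ (k + 1) * qc q n (k + 1) := by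
  have hD : (0:ℝ) < ∏ i ∈ range n, (1 - q ^ (i + 1)) :=
    Finset.prod_pos fun i _ => one_sub_pow_pos hq0 hq1 i
  have hn1 : (0:ℝ) < 1 - q ^ (n + 1) := one_sub_pow_pos hq0 hq1 n
  unfold qc
  rw [Finset.prod_div_distrib, Finset.prod_div_distrib, Finset.prod_div_distrib]
  rw [Finset.prod_range_succ (fun i => (1 - q ^ (i + 1)))]
  have e1 : (∏ i ∈ range (n + 1), (1 - q ^ (k + 1 + i + 1))) =
      (∏ i ∈ range n, (1 - q ^ (k + 1 + i + 1))) * (1 - q ^ (k + 1 + n + 1)) :=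
    Finset.prod_range_succ _ _
  have e2 : (∏ i ∈ range (n + 1), (1 - q ^ (k + i + 1))) =
      (∏ i ∈ range n, (1 - q ^ (k + 1 + i + 1))) * (1 - q ^ (k + 1)) := by
    rw [Finset.prod_range_succ' (fun i => (1 - q ^ (k + i + 1)))]
    congr 1
    exact Finset.prod_congr rfl fun i _ => by ring_nf
  rw [e1, e2]
  field_simp
  ring

include hq0 hq1 in
lemma key (n : ℕ) : ∀ t : ℝ, |t| < 1 →
    (∏ s ∈ Finset.range (n + 1), (1 - q ^ s * t))⁻¹ = ∑' k : ℕ, qc q n k * t ^ k := by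
  induction n with
  | zero =>
    intro t ht
    have : ∀ k : ℕ, qc q 0 k * t ^ k = t ^ k := by
      intro k; unfold qc; simp
    rw [tsum_congr this, tsum_geometric_of_abs_lt_one ht]
    simp
  | succ n ih =>
    intro t ht
    have hqt : |q * t| < 1 := by
      rw [abs_mul, abs_of_pos hq0]
      calc q * |t| ≤ 1 * |t| := by nlinarith [abs_nonneg t]
        _ < 1 := by rwa [one_mul]
    have ht1 : (1:ℝ) - t ≠ 0 := by
      rcases abs_lt.mp ht with ⟨h1, h2⟩; intro h; nlinarith
    have hS : Summable (fun k : ℕ => qc q (n + 1) k * t ^ k) := qc_summable hq0 hq1 _ ht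
    have hS' : Summable (fun k : ℕ => qc q (n + 1) (k + 1) * t ^ (k + 1)) :=
      (summable_nat_add_iff (f := fun k : ℕ => qc q (n + 1) k * t ^ k) 1).mpr hS
    have hSt : Summable (fun k : ℕ => t * (qc q (n + 1) k * t ^ k)) := hS.mul_left t
    have h1 : ∑' k : ℕ, qc q n k * (q * t) ^ k =
        (1 - t) * ∑' k : ℕ, qc q (n + 1) k * t ^ k := by
      have expand : (1 - t) * ∑' k : ℕ, qc q (n + 1) k * t ^ k =
          (∑' k : ℕ, qc q (n + 1) k * t ^ k) - ∑' k : ℕ, t * (qc q (n + 1) k * t ^ k) := by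
        rw [tsum_mul_left]; ring
      rw [expand, Summable.tsum_eq_zero_add hS, add_sub_assoc, ← Summable.tsum_sub hS' hSt]
      have step : ∀ k : ℕ, qc q (n + 1) (k + 1) * t ^ (k + 1) -
          t * (qc q (n + 1) k * t ^ k) = qc q n (k + 1) * (q * t) ^ (k + 1) := by
        intro k
        have hp := qc_pascal hq0 hq1 n k
        have ht' : t * (qc q (n + 1) k * t ^ k) = qc q (n + 1) k * t ^ (k + 1) := by ring
        rw [ht', ← sub_mul, hp, mul_pow]
        ring
      rw [tsum_congr step]
      have hprodne : ∀ N : ℕ, (∏ x ∈ range N, (1 - q ^ (x + 1))) ≠ 0 := fun N =>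
        (Finset.prod_pos fun i _ => one_sub_pow_pos hq0 hq1 i).ne'
      have h0 : qc q (n + 1) 0 * t ^ 0 = qc q n 0 * (q * t) ^ 0 := by
        unfold qc
        simp only [pow_zero, mul_one, zero_add, Finset.prod_div_distrib]
        rw [div_self (hprodne _), div_self (hprodne _)]
      rw [h0, ← Summable.tsum_eq_zero_add (qc_summable hq0 hq1 n hqt)]
    have hprod : (∏ s ∈ Finset.range (n + 1 + 1), (1 - q ^ s * t)) =
        (∏ s ∈ Finset.range (n + 1), (1 - q ^ s * (q * t))) * (1 - t) := by
      rw [Finset.prod_range_succ' (fun s => (1 - q ^ s * t))]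
      congr 1
      · exact Finset.prod_congr rfl fun s _ => by ring
      · simp
    rw [hprod, mul_inv, ih (q * t) hqt, h1]
    field_simp

end aux

/-- `1/(1-t)_q^m = Σ_{k=0}^∞ [m+k-1 choose k]_q t^k` for `0 < q < 1`, `m ≥ 1`, `|t| < 1`. -/
theorem inv_qPoch_eq_tsum_qChoose (q : ℝ) (hq0 : 0 < q) (hq1 : q < 1)
    (m : ℕ) (hm : 1 ≤ m) (t : ℝ) (ht : |t| < 1) :
    (∏ s ∈ Finset.range m, (1 - q ^ s * t))⁻¹ =
      ∑' k : ℕ, qChoose q (m + k - 1) k * t ^ k := by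
  obtain ⟨n, rfl⟩ : ∃ n, m = n + 1 := ⟨m - 1, by omega⟩
  rw [key hq0 hq1 n t ht]
  refine (tsum_congr fun k => ?_).symm
  have hnk : n + 1 + k - 1 = n + k := by omega
  rw [hnk, qChoose_eq_qc hq0 hq1 n k]
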